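/- The solution of the kernel recursion Q_{h,ν}(η|γ) = h·∑_{ξ ⊆ γ} K_ν(x;ξ)·Q_{h,ν}((η∖{x})∪ξ | γ∖ξ) (for any x ∈ η, |η| ≥ 1), with Q_{h,ν}(∅|∅) = 1, Q_{h,ν}(∅|γ) = 0 for γ ≠ ∅, where K_ν(x;ξ) = ∏_{y∈ξ} ν(x−y) (and = 1 for ξ = ∅), is given by Q_{h,ν}(η|γ) = ∑_{f ∈ F(η,γ)} h^{|η|+|γ|} ∏_{(x',y') ∈ E(f)} ν(x'−y'). -/

import Mathlib

/-- `G` is a rooted labeled forest on the vertex set `S` with root set `R`: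
acyclic, and every connected component contains exactly one root. -/
def IsRootedForest {V : Type*} {S : Finset V} (G : SimpleGraph S) (R : Finset V) : Prop :=
  G.IsAcyclic ∧ ∀ c : G.ConnectedComponent,
    ∃! r : S, (r : V) ∈ R ∧ G.connectedComponentMk r = c


open SimpleGraph

section Aux
variable {V : Type*} {V' : Type*}

lemma acyclic_gadget {G : SimpleGraph V} (hG : G.IsAcyclic) {u y₁ y₂ : V}
    (h1 : G.Adj u y₁) (h2 : G.Adj u y₂) (hne : y₁ ≠ y₂)
    (w : G.Walk y₁ y₂) (hu : u ∉ w.support) : False := by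
  classical
  set p := w.toPath with hp
  have hup : u ∉ (p : G.Walk y₁ y₂).support := fun hmem => hu (w.support_toPath_subset hmem)
  have hpath : (Walk.cons h1 (p : G.Walk y₁ y₂)).IsPath := p.2.cons hup
  have := (isAcyclic_iff_path_unique.mp hG) (SimpleGraph.Path.singleton h2) ⟨Walk.cons h1 p, hpath⟩
  have hlen : (SimpleGraph.Path.singleton h2 : G.Walk u y₂).length =
      (Walk.cons h1 (p : G.Walk y₁ y₂)).length := by rw [this]
  have hplen : (p : G.Walk y₁ y₂).length ≠ 0 := by
    intro h0
    exact hne (Walk.eq_of_length_eq_zero h0)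
  simp only [SimpleGraph.Path.singleton, Walk.length_cons, Walk.length_nil] at hlen
  omega

lemma walk_descend {G : SimpleGraph V} {G' : SimpleGraph V'} (P : V → Prop)
    (res : ∀ a, P a → V')
    (hadj : ∀ a b (ha : P a) (hb : P b), G.Adj a b → G'.Adj (res a ha) (res b hb)) :
    ∀ {a b : V} (w : G.Walk a b) (_ : ∀ z ∈ w.support, P z) (ha : P a) (hb : P b),
    ∃ w' : G'.Walk (res a ha) (res b hb),
      ∀ z ∈ w'.support, ∃ y hy, z = res y hy ∧ y ∈ w.support := by
  intro a b w
  induction w with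
  | nil =>
    intro _ ha hb
    refine ⟨Walk.nil, ?_⟩
    intro z hz
    simp only [Walk.support_nil, List.mem_singleton] at hz
    exact ⟨_, ha, hz, by simp⟩
  | @cons a c b h w ih =>
    intro hsup ha hb
    have hc : P c := hsup c (by simp)
    obtain ⟨w', hw'⟩ := ih (fun z hz => hsup z (by simp [hz])) hc hb
    refine ⟨Walk.cons (hadj a c ha hc h) w', ?_⟩
    intro z hz
    rw [Walk.support_cons] at hz
    rcases List.mem_cons.mp hz with hz | hz
    · exact ⟨_, ha, hz, by simp⟩
    · obtain ⟨y, hy, rfl, hmem⟩ := hw' z hz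
      exact ⟨y, hy, rfl, by simp [hmem]⟩

lemma path_decomp {G : SimpleGraph V} {a b : V} (w : G.Walk a b) (hab : a ≠ b)
    (hp : w.IsPath) :
    ∃ (y : V) (_ : G.Adj a y) (w' : G.Walk y b), a ∉ w'.support := by
  cases w with
  | nil => exact absurd rfl hab
  | cons h w' =>
    refine ⟨_, h, w', ?_⟩
    have := hp.support_nodup
    rw [Walk.support_cons, List.nodup_cons] at this
    exact this.1

lemma cycle_split {G : SimpleGraph V} {u : V} {c : G.Walk u u} (hc : c.IsCycle) :
    ∃ (y₁ y₂ : V) (_ : G.Adj u y₁) (_ : G.Adj u y₂) (q : G.Walk y₁ y₂),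
      y₁ ≠ y₂ ∧ u ∉ q.support ∧ ∀ z ∈ q.support, z ∈ c.support := by
  cases c with
  | nil => exact absurd rfl hc.ne_nil
  | @cons _ y₁ _ h q =>
    obtain ⟨hqpath, hedge⟩ := (Walk.cons_isCycle_iff q h).mp hc
    cases q with
    | nil => exact absurd rfl h.ne'
    | cons h' q' =>
      obtain ⟨y₂, q₂, h₂, heq⟩ := Walk.exists_cons_eq_concat h' q'
      rw [heq] at hqpath hedge
      have hsup : (q₂.concat h₂).support = q₂.support ++ [u] := by
        rw [Walk.support_concat]
      have hnodup := hqpath.support_nodup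
      rw [hsup] at hnodup
      have husupp : u ∉ q₂.support := by
        intro hmem
        have := List.disjoint_of_nodup_append hnodup
        exact this hmem (by simp)
      have hne : y₁ ≠ y₂ := by
        rintro rfl
        apply hedge
        rw [Walk.edges_concat]
        simp [Sym2.eq_swap]
      refine ⟨y₁, y₂, h, h₂.symm, q₂, hne, husupp, ?_⟩
      intro z hz
      rw [Walk.support_cons, heq, hsup]
      simp only [List.mem_cons, List.mem_append]
      exact Or.inr (Or.inl hz)

end Aux

section Surg
variable {W W' : Type*}

/-- Add back the vertex `x` joined to the (images of) vertices satisfying `ξP`. -/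
def phiG (ι : W' → W) (x : W) (ξP : W → Prop) (G' : SimpleGraph W') : SimpleGraph W where
  Adj a b := (a = x ∧ ξP b ∧ b ≠ x) ∨ (b = x ∧ ξP a ∧ a ≠ x) ∨
    (a ≠ b ∧ ∃ a' b', ι a' = a ∧ ι b' = b ∧ G'.Adj a' b')
  symm := by
    constructor
    rintro a b (⟨h1, h2, h3⟩ | ⟨h1, h2, h3⟩ | ⟨h1, a', b', h2, h3, h4⟩)
    · exact Or.inr (Or.inl ⟨h1, h2, h3⟩)
    · exact Or.inl ⟨h1, h2, h3⟩
    · exact Or.inr (Or.inr ⟨h1.symm, b', a', h3, h2, h4.symm⟩)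
  loopless := by
    constructor
    rintro a (⟨h1, h2, h3⟩ | ⟨h1, h2, h3⟩ | ⟨h1, _⟩)
    · exact h3 h1
    · exact h3 h1
    · exact h1 rfl

/-- Abstract version of `IsRootedForest`. -/
def ARF (G : SimpleGraph W) (R : W → Prop) : Prop :=
  G.IsAcyclic ∧ ∀ c : G.ConnectedComponent,
    ∃! r, R r ∧ G.connectedComponentMk r = c

variable {ι : W' → W} {x : W} {ξP : W → Prop} {G' : SimpleGraph W'}

lemma iota_ne (hrange : ∀ w, w ≠ x ↔ ∃ a, ι a = w) (a : W') : ι a ≠ x :=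
  (hrange (ι a)).mpr ⟨a, rfl⟩

noncomputable def pre (hrange : ∀ w, w ≠ x ↔ ∃ a, ι a = w) (w : W) (h : w ≠ x) : W' :=
  ((hrange w).mp h).choose

lemma iota_pre (hrange : ∀ w, w ≠ x ↔ ∃ a, ι a = w) (w : W) (h : w ≠ x) :
    ι (pre hrange w h) = w := ((hrange w).mp h).choose_spec

lemma pre_iota (hrange : ∀ w, w ≠ x ↔ ∃ a, ι a = w) (hι : Function.Injective ι)
    (a : W') (h : ι a ≠ x) : pre hrange (ι a) h = a := hι (iota_pre hrange (ι a) h)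

lemma phiG_adj_x (hrange : ∀ w, w ≠ x ↔ ∃ a, ι a = w) (v : W) :
    (phiG ι x ξP G').Adj x v ↔ ξP v ∧ v ≠ x := by
  constructor
  · rintro (⟨_, h2, h3⟩ | ⟨_, _, h3⟩ | ⟨_, a', b', h2, _, _⟩)
    · exact ⟨h2, h3⟩
    · exact absurd rfl h3
    · exact absurd h2 (iota_ne hrange a')
  · intro ⟨h1, h2⟩
    exact Or.inl ⟨rfl, h1, h2⟩

lemma phiG_adj_of_ne (hrange : ∀ w, w ≠ x ↔ ∃ a, ι a = w) (hι : Function.Injective ι)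
    {a b : W} (ha : a ≠ x) (hb : b ≠ x) :
    (phiG ι x ξP G').Adj a b ↔ G'.Adj (pre hrange a ha) (pre hrange b hb) := by
  constructor
  · rintro (⟨h1, _⟩ | ⟨h1, _⟩ | ⟨h1, a', b', h2, h3, h4⟩)
    · exact absurd h1 ha
    · exact absurd h1 hb
    · have ha' : pre hrange a ha = a' := hι (by rw [iota_pre hrange a ha, h2])
      have hb' : pre hrange b hb = b' := hι (by rw [iota_pre hrange b hb, h3])
      rw [ha', hb']
      exact h4
  · intro h
    refine Or.inr (Or.inr ⟨?_, _, _, iota_pre hrange a ha, iota_pre hrange b hb, h⟩)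
    rintro rfl
    exact h.ne rfl

/-- The natural graph hom from `G'` into `phiG`. -/
def upPhi (hι : Function.Injective ι) (G' : SimpleGraph W') : G' →g phiG ι x ξP G' where
  toFun := ι
  map_rel' := fun {a b} h =>
    Or.inr (Or.inr ⟨fun he => h.ne (hι he), a, b, rfl, rfl, h⟩)

/-- The natural graph hom from the comap into `G`. -/
def upPsi (G : SimpleGraph W) (ι : W' → W) : G.comap ι →g G where
  toFun := ι
  map_rel' := fun h => h

end Surg

section Surg2
variable {W W' : Type*} {ι : W' → W} {x : W} {ξP : W → Prop} {G' : SimpleGraph W'}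

lemma ARF_phiG (hrange : ∀ w, w ≠ x ↔ ∃ a, ι a = w) (hι : Function.Injective ι)
    {Rη : W → Prop} (hRx : Rη x) (hdisj : ∀ w, ξP w → ¬ Rη w)
    (hG' : ARF G' (fun a => Rη (ι a) ∨ ξP (ι a))) :
    ARF (phiG ι x ξP G') Rη := by
  obtain ⟨hac', hroot'⟩ := hG'
  classical
  have hdesc : ∀ {a b : W} (w : (phiG ι x ξP G').Walk a b), (∀ z ∈ w.support, z ≠ x) →
      ∀ (ha : a ≠ x) (hb : b ≠ x), ∃ w' : G'.Walk (pre hrange a ha) (pre hrange b hb),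
        ∀ z ∈ w'.support, ι z ∈ w.support := by
    intro a b w hw ha hb
    obtain ⟨w', hw'⟩ := walk_descend (fun z => z ≠ x) (pre hrange)
      (fun a b ha hb h => (phiG_adj_of_ne hrange hι ha hb).mp h) w hw ha hb
    refine ⟨w', fun z hz => ?_⟩
    obtain ⟨y, hy, rfl, hmem⟩ := hw' z hz
    rw [iota_pre hrange]
    exact hmem
  constructor
  · intro v c hc
    by_cases hxs : x ∈ c.support
    · have hc' := hc.rotate hxs
      obtain ⟨y₁, y₂, h1, h2, q, hne, hus, _⟩ := cycle_split hc'
      have hy1 := (phiG_adj_x hrange y₁).mp h1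
      have hy2 := (phiG_adj_x hrange y₂).mp h2
      have hqsup : ∀ z ∈ q.support, z ≠ x := by
        rintro z hz rfl; exact hus hz
      obtain ⟨q', _⟩ := hdesc q hqsup hy1.2 hy2.2
      obtain ⟨r, _, hun⟩ := hroot' (G'.connectedComponentMk (pre hrange y₂ hy2.2))
      have e1 := hun _ ⟨Or.inr (by rw [iota_pre hrange]; exact hy1.1),
        ConnectedComponent.sound q'.reachable⟩
      have e2 := hun _ ⟨Or.inr (by rw [iota_pre hrange]; exact hy2.1), rfl⟩
      apply hne
      rw [← iota_pre hrange y₁ hy1.2, ← iota_pre hrange y₂ hy2.2, e1, e2]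
    · obtain ⟨y₁, y₂, h1, h2, q, hne, hus, hsub⟩ := cycle_split hc
      have hvx : v ≠ x := fun h => hxs (h ▸ c.start_mem_support)
      have hy1x : y₁ ≠ x := fun h => hxs (h ▸ hsub _ q.start_mem_support)
      have hy2x : y₂ ≠ x := fun h => hxs (h ▸ hsub _ q.end_mem_support)
      have adj1 : G'.Adj (pre hrange v hvx) (pre hrange y₁ hy1x) :=
        (phiG_adj_of_ne hrange hι hvx hy1x).mp h1
      have adj2 : G'.Adj (pre hrange v hvx) (pre hrange y₂ hy2x) :=
        (phiG_adj_of_ne hrange hι hvx hy2x).mp h2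
      have hqsup : ∀ z ∈ q.support, z ≠ x := fun z hz h => hxs (h ▸ hsub z hz)
      obtain ⟨q', hq'⟩ := hdesc q hqsup hy1x hy2x
      refine acyclic_gadget hac' adj1 adj2 ?_ q' ?_
      · intro h
        apply hne
        rw [← iota_pre hrange y₁ hy1x, ← iota_pre hrange y₂ hy2x, h]
      · intro hmem
        have := hq' _ hmem
        rw [iota_pre hrange] at this
        exact hus this
  · intro c
    obtain ⟨v, rfl⟩ := c.exists_rep
    by_cases hvx : (phiG ι x ξP G').Reachable v x
    · refine ⟨x, ⟨hRx, (ConnectedComponent.sound hvx).symm⟩, ?_⟩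
      rintro r ⟨hrR, hrc⟩
      by_contra hrx
      have hreach : (phiG ι x ξP G').Reachable x r := by
        have h1 : (phiG ι x ξP G').Reachable r v := ConnectedComponent.exact hrc
        exact (h1.trans hvx).symm
      obtain ⟨w0⟩ := hreach
      obtain ⟨w, hwp⟩ := w0.toPath
      obtain ⟨y₁, h1, w', hxnot⟩ := path_decomp w (Ne.symm hrx) hwp
      have hy1 := (phiG_adj_x hrange y₁).mp h1
      have hsup : ∀ z ∈ w'.support, z ≠ x := fun z hz h => hxnot (h ▸ hz)
      obtain ⟨q', _⟩ := hdesc w' hsup hy1.2 hrx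
      obtain ⟨ρ, _, hun⟩ := hroot' (G'.connectedComponentMk (pre hrange r hrx))
      have e1 := hun _ ⟨Or.inr (by rw [iota_pre hrange]; exact hy1.1),
        ConnectedComponent.sound q'.reachable⟩
      have e2 := hun _ ⟨Or.inl (by rw [iota_pre hrange]; exact hrR), rfl⟩
      have hyr : y₁ = r := by
        rw [← iota_pre hrange y₁ hy1.2, ← iota_pre hrange r hrx, e1, e2]
      exact hdisj r (hyr ▸ hy1.1) hrR
    · have hvxne : v ≠ x := fun h => hvx (h ▸ Reachable.refl v)
      obtain ⟨ρ, ⟨hρR, hρc⟩, hρu⟩ := hroot' (G'.connectedComponentMk (pre hrange v hvxne))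
      have hρreach : G'.Reachable ρ (pre hrange v hvxne) := ConnectedComponent.exact hρc
      have hup : (phiG ι x ξP G').Reachable (ι ρ) v := by
        have h3 := hρreach.map (upPhi (x := x) (ξP := ξP) hι G')
        have h4 : (upPhi (x := x) (ξP := ξP) hι G') (pre hrange v hvxne) = v :=
          iota_pre hrange v hvxne
        rw [h4] at h3
        exact h3
      rcases hρR with hρR | hρR
      · refine ⟨ι ρ, ⟨hρR, ConnectedComponent.sound hup⟩, ?_⟩
        rintro r ⟨hrR, hrc⟩
        have hrx : r ≠ x := by
          rintro rfl
          exact hvx (ConnectedComponent.exact hrc).symm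
        have hreach : (phiG ι x ξP G').Reachable r v := ConnectedComponent.exact hrc
        obtain ⟨w0⟩ := hreach
        have hxnot : x ∉ w0.support := by
          intro hmem
          have hmem' : x ∈ w0.reverse.support := by rw [Walk.support_reverse]; simpa using hmem
          exact hvx (w0.reverse.takeUntil x hmem').reachable
        have hsup : ∀ z ∈ w0.support, z ≠ x := fun z hz h => hxnot (h ▸ hz)
        obtain ⟨q', _⟩ := hdesc w0 hsup hrx hvxne
        have e := hρu _ ⟨Or.inl (by rw [iota_pre hrange]; exact hrR),
          ConnectedComponent.sound q'.reachable⟩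
        rw [← iota_pre hrange r hrx, e]
      · exfalso
        have hadj : (phiG ι x ξP G').Adj x (ι ρ) :=
          (phiG_adj_x hrange (ι ρ)).mpr ⟨hρR, iota_ne hrange ρ⟩
        exact hvx (hup.symm.trans hadj.symm.reachable)

end Surg2

section Surg3
variable {W W' : Type*} {ι : W' → W} {x : W} {ξP : W → Prop}

lemma ARF_root_adj {G : SimpleGraph W} {Rη : W → Prop} (hG : ARF G Rη) (hRx : Rη x)
    {v : W} (h : G.Adj x v) : ¬ Rη v := by
  intro hv
  obtain ⟨r, _, hun⟩ := hG.2 (G.connectedComponentMk v)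
  have e1 := hun x ⟨hRx, ConnectedComponent.sound h.reachable⟩
  have e2 := hun v ⟨hv, rfl⟩
  exact h.ne (by rw [e1, e2])

lemma ARF_comap (hrange : ∀ w, w ≠ x ↔ ∃ a, ι a = w) (hι : Function.Injective ι)
    {Rη : W → Prop} (hRx : Rη x) {G : SimpleGraph W}
    (hG : ARF G Rη) (hnb : ∀ v, G.Adj x v ↔ ξP v) :
    ARF (G.comap ι) (fun a => Rη (ι a) ∨ ξP (ι a)) := by
  obtain ⟨hac, hroot⟩ := hG
  classical
  have hdesc : ∀ {a b : W} (w : G.Walk a b), (∀ z ∈ w.support, z ≠ x) →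
      ∀ (ha : a ≠ x) (hb : b ≠ x),
      (G.comap ι).Reachable (pre hrange a ha) (pre hrange b hb) := by
    intro a b w hw ha hb
    obtain ⟨w', _⟩ := walk_descend (G' := G.comap ι) (fun z => z ≠ x) (pre hrange)
      (fun a b ha hb h => by
        show G.Adj (ι (pre hrange a ha)) (ι (pre hrange b hb))
        rw [iota_pre hrange, iota_pre hrange]; exact h) w hw ha hb
    exact w'.reachable
  have hup : ∀ {a b : W'}, (G.comap ι).Reachable a b → G.Reachable (ι a) (ι b) :=
    fun hr => hr.map (upPsi G ι)
  constructor
  · intro v c hc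
    exact hac _ ((Walk.map_isCycle_iff_of_injective (p := c) (f := upPsi G ι) hι).mpr hc)
  · intro c
    obtain ⟨v, rfl⟩ := c.exists_rep
    obtain ⟨r, ⟨hrR, hrc⟩, hru⟩ := hroot (G.connectedComponentMk (ι v))
    by_cases hrx : r = x
    · -- the root of (ι v)'s component is x
      have hreach : G.Reachable x (ι v) := hrx ▸ ConnectedComponent.exact hrc
      obtain ⟨w0⟩ := hreach
      obtain ⟨w, hwp⟩ := w0.toPath
      obtain ⟨y₁, h1, w', hxnot⟩ := path_decomp w (fun h => iota_ne hrange v h.symm) hwp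
      have hy1 : ξP y₁ := (hnb y₁).mp h1
      have hy1x : y₁ ≠ x := h1.ne'
      have hsup : ∀ z ∈ w'.support, z ≠ x := fun z hz h => hxnot (h ▸ hz)
      have hreach' := hdesc w' hsup hy1x (iota_ne hrange v)
      rw [pre_iota hrange hι v] at hreach'
      refine ⟨pre hrange y₁ hy1x, ⟨Or.inr (by rw [iota_pre hrange]; exact hy1),
        ConnectedComponent.sound hreach'⟩, ?_⟩
      rintro a ⟨haR, hac0⟩
      have hav : (G.comap ι).Reachable a v := ConnectedComponent.exact hac0
      rcases haR with haR | haR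
      · exfalso
        have h2 := hup hav
        have := hru (ι a) ⟨haR, ConnectedComponent.sound h2⟩
        exact iota_ne hrange a (this.trans hrx)
      · -- both a and pre y₁ are ξ-roots
        by_contra hane
        have hadj : G.Adj x (ι a) := (hnb (ι a)).mpr haR
        have hreach2 : (G.comap ι).Reachable a (pre hrange y₁ hy1x) :=
          hav.trans hreach'.symm
        obtain ⟨wc⟩ := hreach2
        have hιne : ι a ≠ y₁ := by
          intro h
          exact hane (by rw [← pre_iota hrange hι a (iota_ne hrange a)]; congr 1)
        refine acyclic_gadget hac hadj h1 hιne ((wc.map (upPsi G ι)).copy rfl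
          (iota_pre hrange y₁ hy1x)) ?_
        intro hmem
        replace hmem := (congrArg (x ∈ ·) (Walk.support_copy _ _ _)).mp hmem
        rw [Walk.support_map] at hmem
        obtain ⟨z, _, hz⟩ := List.mem_map.mp hmem
        exact iota_ne hrange z hz
    · -- root r ≠ x
      have hnreach : ¬ G.Reachable (ι v) x := by
        intro hr
        exact hrx (hru x ⟨hRx, (ConnectedComponent.sound hr).symm⟩).symm
      have hreach : G.Reachable (ι v) r := (ConnectedComponent.exact hrc).symm
      obtain ⟨w0⟩ := hreach
      have hxnot : x ∉ w0.support := by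
        intro hmem
        exact hnreach (w0.takeUntil x hmem).reachable
      have hsup : ∀ z ∈ w0.support, z ≠ x := fun z hz h => hxnot (h ▸ hz)
      have hreach' := hdesc w0 hsup (iota_ne hrange v) hrx
      rw [pre_iota hrange hι v] at hreach'
      refine ⟨pre hrange r hrx, ⟨Or.inl (by rw [iota_pre hrange]; exact hrR),
        (ConnectedComponent.sound hreach').symm⟩, ?_⟩
      rintro a ⟨haR, hac0⟩
      have hav : (G.comap ι).Reachable a v := ConnectedComponent.exact hac0
      rcases haR with haR | haR
      · have h2 := hup hav
        have := hru (ι a) ⟨haR, ConnectedComponent.sound h2⟩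
        apply hι
        rw [iota_pre hrange, this]
      · exfalso
        have hadj : G.Adj x (ι a) := (hnb (ι a)).mpr haR
        exact hnreach ((hup hav).symm.trans hadj.symm.reachable)

end Surg3

section Surg4
variable {W W' : Type*} {ι : W' → W} {x : W} {ξP : W → Prop} {G' : SimpleGraph W'}

lemma psi_phiG (hrange : ∀ w, w ≠ x ↔ ∃ a, ι a = w) (hι : Function.Injective ι)
    (G' : SimpleGraph W') : (phiG ι x ξP G').comap ι = G' := by
  ext a b
  show (phiG ι x ξP G').Adj (ι a) (ι b) ↔ G'.Adj a b
  rw [phiG_adj_of_ne hrange hι (iota_ne hrange a) (iota_ne hrange b),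
    pre_iota hrange hι a, pre_iota hrange hι b]

lemma phiG_psi (hrange : ∀ w, w ≠ x ↔ ∃ a, ι a = w) (hι : Function.Injective ι)
    {G : SimpleGraph W} (hnb : ∀ v, G.Adj x v ↔ ξP v) :
    phiG ι x ξP (G.comap ι) = G := by
  ext a b
  by_cases ha : a = x
  · subst ha
    rw [phiG_adj_x hrange b, ← hnb b]
    constructor
    · exact fun h => h.1
    · exact fun h => ⟨h, h.ne'⟩
  · by_cases hb : b = x
    · subst hb
      rw [adj_comm, adj_comm (G := G)]
      rw [phiG_adj_x hrange a, ← hnb a]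
      constructor
      · exact fun h => h.1
      · exact fun h => ⟨h, h.ne'⟩
    · rw [phiG_adj_of_ne hrange hι ha hb]
      show G.Adj (ι (pre hrange a ha)) (ι (pre hrange b hb)) ↔ _
      rw [iota_pre hrange, iota_pre hrange]

lemma phiG_edgeSet (hrange : ∀ w, w ≠ x ↔ ∃ a, ι a = w) (hι : Function.Injective ι)
    (hξx : ¬ ξP x) :
    (phiG ι x ξP G').edgeSet =
      (Sym2.map ι) '' G'.edgeSet ∪ {e | ∃ v, ξP v ∧ v ≠ x ∧ e = s(x, v)} := by
  ext e
  induction e with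
  | _ a b =>
    simp only [mem_edgeSet, Set.mem_union, Set.mem_image, Set.mem_setOf_eq]
    constructor
    · rintro (⟨rfl, h2, h3⟩ | ⟨rfl, h2, h3⟩ | ⟨h1, a', b', rfl, rfl, h4⟩)
      · exact Or.inr ⟨b, h2, h3, rfl⟩
      · exact Or.inr ⟨a, h2, h3, Sym2.eq_swap⟩
      · exact Or.inl ⟨s(a', b'), h4, rfl⟩
    · rintro (⟨e', he', heq⟩ | ⟨v, hv, hvx, heq⟩)
      · induction e' with
        | _ a' b' =>
          rw [Sym2.map_pair_eq, Sym2.eq_iff] at heq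
          rcases heq with ⟨rfl, rfl⟩ | ⟨rfl, rfl⟩
          · exact Or.inr (Or.inr ⟨fun h => he'.ne (hι h), a', b', rfl, rfl, he'⟩)
          · exact Or.inr (Or.inr ⟨fun h => he'.ne' (hι h), b', a', rfl, rfl, he'.symm⟩)
      · rw [Sym2.eq_iff] at heq
        rcases heq with ⟨rfl, rfl⟩ | ⟨rfl, rfl⟩
        · exact Or.inl ⟨rfl, hv, hvx⟩
        · exact Or.inr (Or.inl ⟨rfl, hv, hvx⟩)

end Surg4

section Concrete
variable {V : Type*} [DecidableEq V]

/-- `IsRootedForest` matches its abstract version pointwise. -/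
lemma isRootedForest_iff_ARF {S : Finset V} (G : SimpleGraph S) (R : Finset V) :
    IsRootedForest G R ↔ ARF G (fun v : S => (v : V) ∈ R) := Iff.rfl

lemma ARF_congr {W : Type*} {G : SimpleGraph W} {R1 R2 : W → Prop} (h : ∀ r, R1 r ↔ R2 r) :
    ARF G R1 ↔ ARF G R2 := by
  rw [show R1 = R2 from funext fun r => propext (h r)]

lemma memA' (η γ ξ : Finset V) (x : V) (hd : Disjoint η γ) (hx : x ∈ η) (hsub : ξ ⊆ γ)
    (v : V) : v ∈ (η.erase x ∪ ξ) ∪ (γ \ ξ) ↔ v ∈ η ∪ γ ∧ v ≠ x := by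
  have hxγ : x ∉ γ := fun h => Finset.disjoint_left.mp hd hx h
  simp only [Finset.mem_union, Finset.mem_erase, Finset.mem_sdiff]
  constructor
  · rintro ((⟨hne, hv⟩ | hv) | ⟨hv, _⟩)
    · exact ⟨Or.inl hv, hne⟩
    · exact ⟨Or.inr (hsub hv), fun h => hxγ (h ▸ hsub hv)⟩
    · exact ⟨Or.inr hv, fun h => hxγ (h ▸ hv)⟩
  · rintro ⟨hv | hv, hne⟩
    · exact Or.inl (Or.inl ⟨hne, hv⟩)
    · by_cases hv' : v ∈ ξ
      · exact Or.inl (Or.inr hv')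
      · exact Or.inr ⟨hv, hv'⟩

def iotaC (η γ ξ : Finset V) (x : V) (hd : Disjoint η γ) (hx : x ∈ η) (hsub : ξ ⊆ γ) :
    ((η.erase x ∪ ξ) ∪ (γ \ ξ) : Finset V) → (η ∪ γ : Finset V) :=
  fun a => ⟨a.1, ((memA' η γ ξ x hd hx hsub a.1).mp a.2).1⟩

lemma iotaC_inj (η γ ξ : Finset V) (x : V) (hd : Disjoint η γ) (hx : x ∈ η) (hsub : ξ ⊆ γ) :
    Function.Injective (iotaC η γ ξ x hd hx hsub) :=
  fun a b h => Subtype.ext (congrArg (fun w : (η ∪ γ : Finset V) => w.1) h)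

lemma iotaC_range (η γ ξ : Finset V) (x : V) (hd : Disjoint η γ) (hx : x ∈ η) (hsub : ξ ⊆ γ) :
    ∀ w : (η ∪ γ : Finset V), w ≠ ⟨x, Finset.mem_union_left γ hx⟩ ↔
      ∃ a, iotaC η γ ξ x hd hx hsub a = w := by
  intro w
  constructor
  · intro hw
    have hwx : w.1 ≠ x := fun h => hw (Subtype.ext h)
    exact ⟨⟨w.1, (memA' η γ ξ x hd hx hsub w.1).mpr ⟨w.2, hwx⟩⟩, Subtype.ext rfl⟩
  · rintro ⟨a, rfl⟩ h
    exact ((memA' η γ ξ x hd hx hsub a.1).mp a.2).2 (congrArg Subtype.val h)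

/-- The edge weight of a graph on a finite vertex set. -/
noncomputable def wgt (ν : V → V → ℝ) (hν : ∀ a b, ν a b = ν b a) (S : Finset V)
    (G : SimpleGraph (S : Finset V)) : ℝ :=
  ∏ e ∈ G.edgeSet.toFinite.toFinset,
    Sym2.lift ⟨fun a b : (S : Finset V) => ν a b, fun a b => hν a b⟩ e

end Concrete

section Concrete2
variable {V : Type*} [DecidableEq V]

lemma wgt_phiG (ν : V → V → ℝ) (hν : ∀ a b, ν a b = ν b a) (η γ ξ : Finset V) (x : V)
    (hd : Disjoint η γ) (hx : x ∈ η) (hsub : ξ ⊆ γ)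
    (G' : SimpleGraph ((η.erase x ∪ ξ) ∪ (γ \ ξ) : Finset V)) :
    wgt ν hν (η ∪ γ) (phiG (iotaC η γ ξ x hd hx hsub) ⟨x, Finset.mem_union_left γ hx⟩
        (fun v => (v : V) ∈ ξ) G')
      = (∏ y ∈ ξ, ν x y) * wgt ν hν ((η.erase x ∪ ξ) ∪ (γ \ ξ)) G' := by
  classical
  set ι := iotaC η γ ξ x hd hx hsub with hιdef
  set xh : (η ∪ γ : Finset V) := ⟨x, Finset.mem_union_left γ hx⟩ with hxhdef
  have hrange := iotaC_range η γ ξ x hd hx hsub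
  have hι := iotaC_inj η γ ξ x hd hx hsub
  have hxξ : x ∉ ξ := fun h => Finset.disjoint_left.mp hd hx (hsub h)
  have hξx : ¬ ((xh : V) ∈ ξ) := hxξ
  have hES := phiG_edgeSet (G' := G') (ξP := fun v : (η ∪ γ : Finset V) => (v : V) ∈ ξ)
    hrange hι hξx
  set f : {y // y ∈ ξ} → Sym2 (η ∪ γ : Finset V) :=
    fun y => s(xh, (⟨y.1, Finset.mem_union_right η (hsub y.2)⟩ : (η ∪ γ : Finset V))) with hfdef
  have hEF : (phiG ι xh (fun v : (η ∪ γ : Finset V) => (v : V) ∈ ξ) G').edgeSet.toFinite.toFinset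
      = G'.edgeSet.toFinite.toFinset.image (Sym2.map ι) ∪ ξ.attach.image f := by
    ext e
    rw [Set.Finite.mem_toFinset, hES]
    simp only [Set.mem_union, Set.mem_image, Set.mem_setOf_eq, Finset.mem_union,
      Finset.mem_image, Set.Finite.mem_toFinset, Finset.mem_attach]
    constructor
    · rintro (⟨e', he', rfl⟩ | ⟨v, hv, hvx, rfl⟩)
      · exact Or.inl ⟨e', he', rfl⟩
      · exact Or.inr ⟨⟨v.1, hv⟩, trivial, congrArg (fun w => s(xh, w)) (Subtype.ext rfl)⟩
    · rintro (⟨e', he', rfl⟩ | ⟨y, -, rfl⟩)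
      · exact Or.inl ⟨e', he', rfl⟩
      · exact Or.inr ⟨⟨y.1, Finset.mem_union_right η (hsub y.2)⟩, y.2,
          fun hc => hxξ (by
            rw [← show (y.1 : V) = x from congrArg (fun w : (η ∪ γ : Finset V) => (w : V)) hc]
            exact y.2), rfl⟩
  have hdisj2 : Disjoint (G'.edgeSet.toFinite.toFinset.image (Sym2.map ι)) (ξ.attach.image f) := by
    rw [Finset.disjoint_left]
    intro e h1 h2
    rw [Finset.mem_image] at h1 h2
    obtain ⟨e', -, rfl⟩ := h1
    obtain ⟨y, -, hy⟩ := h2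
    have hmem : xh ∈ Sym2.map ι e' := by
      rw [← hy, hfdef]
      exact Sym2.mem_mk_left _ _
    obtain ⟨z, -, hz⟩ := Sym2.mem_map.mp hmem
    exact iota_ne hrange z hz
  rw [wgt, wgt, hEF, Finset.prod_union hdisj2,
    Finset.prod_image (fun e1 _ e2 _ h => Sym2.map.injective hι h),
    Finset.prod_image ?inj2]
  case inj2 =>
    rintro y1 - y2 - h
    simp only [hfdef, Sym2.eq_iff] at h
    rcases h with ⟨-, h⟩ | ⟨h, -⟩
    · exact Subtype.ext (congrArg (fun w : (η ∪ γ : Finset V) => (w : V)) h)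
    · refine absurd ?_ hxξ
      rw [← show (y2.1 : V) = x from congrArg (fun w : (η ∪ γ : Finset V) => (w : V)) h.symm]
      exact y2.2
  have h1 : (∏ e' ∈ G'.edgeSet.toFinite.toFinset,
        Sym2.lift ⟨fun a b : (η ∪ γ : Finset V) => ν a b, fun a b => hν a b⟩ (Sym2.map ι e'))
      = ∏ e' ∈ G'.edgeSet.toFinite.toFinset,
        Sym2.lift ⟨fun a b : ((η.erase x ∪ ξ) ∪ (γ \ ξ) : Finset V) => ν a b,
          fun a b => hν a b⟩ e' := by
    refine Finset.prod_congr rfl fun e' _ => ?_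
    induction e' with
    | _ a b =>
      rw [Sym2.map_pair_eq, Sym2.lift_mk, Sym2.lift_mk]
      rfl
  have h2 : (∏ y ∈ ξ.attach,
        Sym2.lift ⟨fun a b : (η ∪ γ : Finset V) => ν a b, fun a b => hν a b⟩ (f y))
      = ∏ y ∈ ξ, ν x y := by
    rw [← Finset.prod_attach ξ (fun y => ν x y)]
    refine Finset.prod_congr rfl fun y _ => ?_
    rw [hfdef, Sym2.lift_mk]
  rw [h1, h2, mul_comm]
end Concrete2

section Concrete3
variable {V : Type*} [DecidableEq V]

open scoped Classical in
noncomputable def nbSet (η γ : Finset V) (x : V) (hxA : x ∈ η ∪ γ)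
    (G : SimpleGraph (η ∪ γ : Finset V)) : Finset V :=
  γ.filter (fun y => ∃ hy : y ∈ η ∪ γ, G.Adj ⟨x, hxA⟩ ⟨y, hy⟩)

open scoped Classical in
lemma mem_nbSet {η γ : Finset V} {x : V} {hxA : x ∈ η ∪ γ}
    {G : SimpleGraph (η ∪ γ : Finset V)} {y : V} :
    y ∈ nbSet η γ x hxA G ↔ y ∈ γ ∧ ∃ hy : y ∈ η ∪ γ, G.Adj ⟨x, hxA⟩ ⟨y, hy⟩ :=
  Finset.mem_filter

lemma nb_char {η γ : Finset V} (hd : Disjoint η γ) {x : V} (hx : x ∈ η)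
    {G : SimpleGraph (η ∪ γ : Finset V)} (hG : IsRootedForest G η)
    {ξ : Finset V} (hsub : ξ ⊆ γ) :
    nbSet η γ x (Finset.mem_union_left γ hx) G = ξ ↔
      ∀ v : (η ∪ γ : Finset V), G.Adj ⟨x, Finset.mem_union_left γ hx⟩ v ↔ (v : V) ∈ ξ := by
  have hadjγ : ∀ v : (η ∪ γ : Finset V),
      G.Adj ⟨x, Finset.mem_union_left γ hx⟩ v → (v : V) ∈ γ := by
    intro v hv
    have hnη : ¬ ((v : V) ∈ η) :=
      ARF_root_adj ((isRootedForest_iff_ARF G η).mp hG) hx hv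
    rcases Finset.mem_union.mp v.2 with h | h
    · exact absurd h hnη
    · exact h
  constructor
  · intro h v
    constructor
    · intro hadj
      rw [← h]
      exact mem_nbSet.mpr ⟨hadjγ v hadj, v.2, hadj⟩
    · intro hvξ
      rw [← h] at hvξ
      obtain ⟨-, hy, hadj⟩ := mem_nbSet.mp hvξ
      have : (⟨(v : V), hy⟩ : (η ∪ γ : Finset V)) = v := Subtype.ext rfl
      rwa [this] at hadj
  · intro h
    ext y
    rw [mem_nbSet]
    constructor
    · rintro ⟨-, hy, hadj⟩
      exact (h ⟨y, hy⟩).mp hadj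
    · intro hyξ
      have hy : y ∈ η ∪ γ := Finset.mem_union_right η (hsub hyξ)
      exact ⟨hsub hyξ, hy, (h ⟨y, hy⟩).mpr hyξ⟩

open scoped Classical in
lemma step_fiber (ν : V → V → ℝ) (hν : ∀ a b, ν a b = ν b a) (η γ : Finset V) (x : V)
    (hd : Disjoint η γ) (hx : x ∈ η) (ξ : Finset V) (hsub : ξ ⊆ γ) :
    (∑ G : SimpleGraph (η ∪ γ : Finset V),
      if nbSet η γ x (Finset.mem_union_left γ hx) G = ξ ∧ IsRootedForest G η
      then wgt ν hν (η ∪ γ) G else 0)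
    = (∏ y ∈ ξ, ν x y) *
      ∑ G' : SimpleGraph ((η.erase x ∪ ξ) ∪ (γ \ ξ) : Finset V),
        if IsRootedForest G' (η.erase x ∪ ξ)
        then wgt ν hν ((η.erase x ∪ ξ) ∪ (γ \ ξ)) G' else 0 := by
  classical
  set ι := iotaC η γ ξ x hd hx hsub with hιdef
  have hrange := iotaC_range η γ ξ x hd hx hsub
  have hι := iotaC_inj η γ ξ x hd hx hsub
  have hxξ : x ∉ ξ := fun h => Finset.disjoint_left.mp hd hx (hsub h)
  have hdisjP : ∀ w : (η ∪ γ : Finset V), (w : V) ∈ ξ → ¬ ((w : V) ∈ η) :=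
    fun w hw hR => Finset.disjoint_left.mp hd hR (hsub hw)
  have hRiff : ∀ G' : SimpleGraph ((η.erase x ∪ ξ) ∪ (γ \ ξ) : Finset V),
      (ARF G' (fun a => ((ι a : V) ∈ η) ∨ ((ι a : V) ∈ ξ)) ↔
        IsRootedForest G' (η.erase x ∪ ξ)) := by
    intro G'
    rw [isRootedForest_iff_ARF]
    refine ARF_congr fun a => ?_
    have hax : (a : V) ≠ x := ((memA' η γ ξ x hd hx hsub a.1).mp a.2).2
    show ((a : V) ∈ η ∨ (a : V) ∈ ξ) ↔ (a : V) ∈ η.erase x ∪ ξ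
    rw [Finset.mem_union, Finset.mem_erase]
    constructor
    · rintro (h | h)
      · exact Or.inl ⟨hax, h⟩
      · exact Or.inr h
    · rintro (⟨-, h⟩ | h)
      · exact Or.inl h
      · exact Or.inr h
  rw [Finset.mul_sum]
  simp only [mul_ite, mul_zero]
  rw [← Finset.sum_filter, ← Finset.sum_filter]
  refine Finset.sum_nbij' (fun G => G.comap ι)
    (fun G' => phiG ι ⟨x, Finset.mem_union_left γ hx⟩ (fun v => (v : V) ∈ ξ) G')
    ?_ ?_ ?_ ?_ ?_
  · -- maps to
    intro G hG
    rw [Finset.mem_filter] at hG ⊢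
    have hnbh := (nb_char hd hx hG.2.2 hsub).mp hG.2.1
    refine ⟨Finset.mem_univ _, ?_⟩
    rw [← hRiff]
    exact ARF_comap hrange hι (Rη := fun v => (v : V) ∈ η) hx
      ((isRootedForest_iff_ARF G η).mp hG.2.2) hnbh
  · -- maps from
    intro G' hG'
    rw [Finset.mem_filter] at hG' ⊢
    have hARF' := (hRiff G').mpr hG'.2
    have hRF : IsRootedForest
        (phiG ι ⟨x, Finset.mem_union_left γ hx⟩ (fun v => (v : V) ∈ ξ) G') η := by
      rw [isRootedForest_iff_ARF]
      exact ARF_phiG hrange hι hx hdisjP hARF'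
    refine ⟨Finset.mem_univ _, ?_, hRF⟩
    rw [nb_char hd hx hRF hsub]
    intro v
    rw [phiG_adj_x hrange]
    constructor
    · exact fun h => h.1
    · intro hvξ
      refine ⟨hvξ, fun hc => ?_⟩
      refine Finset.disjoint_left.mp hd hx (hsub ?_)
      rw [← show (v : V) = x from congrArg (fun w : (η ∪ γ : Finset V) => (w : V)) hc]
      exact hvξ
  · -- left inverse
    intro G hG
    rw [Finset.mem_filter] at hG
    have hnbh := (nb_char hd hx hG.2.2 hsub).mp hG.2.1
    refine phiG_psi hrange hι fun v => ?_
    rw [hnbh v]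
  · -- right inverse
    intro G' _
    exact psi_phiG hrange hι G'
  · -- values
    intro G hG
    rw [Finset.mem_filter] at hG
    have hnbh := (nb_char hd hx hG.2.2 hsub).mp hG.2.1
    have hback : phiG ι ⟨x, Finset.mem_union_left γ hx⟩ (fun v => (v : V) ∈ ξ) (G.comap ι) = G :=
      phiG_psi hrange hι fun v => by rw [hnbh v]
    calc wgt ν hν (η ∪ γ) G
        = wgt ν hν (η ∪ γ) (phiG ι ⟨x, Finset.mem_union_left γ hx⟩
            (fun v => (v : V) ∈ ξ) (G.comap ι)) := by rw [hback]
      _ = (∏ y ∈ ξ, ν x y) * wgt ν hν ((η.erase x ∪ ξ) ∪ (γ \ ξ)) (G.comap ι) :=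
          wgt_phiG ν hν η γ ξ x hd hx hsub (G.comap ι)

end Concrete3

section Concrete4
variable {V : Type*} [DecidableEq V]

open scoped Classical in
lemma step_sum (ν : V → V → ℝ) (hν : ∀ a b, ν a b = ν b a) (η γ : Finset V) (x : V)
    (hd : Disjoint η γ) (hx : x ∈ η) :
    (∑ G : SimpleGraph (η ∪ γ : Finset V),
      if IsRootedForest G η then wgt ν hν (η ∪ γ) G else 0)
    = ∑ ξ ∈ γ.powerset, (∏ y ∈ ξ, ν x y) *
        ∑ G' : SimpleGraph ((η.erase x ∪ ξ) ∪ (γ \ ξ) : Finset V),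
          if IsRootedForest G' (η.erase x ∪ ξ)
          then wgt ν hν ((η.erase x ∪ ξ) ∪ (γ \ ξ)) G' else 0 := by
  classical
  rw [← Finset.sum_fiberwise_of_maps_to (g := nbSet η γ x (Finset.mem_union_left γ hx))
    (t := γ.powerset) (fun G _ => Finset.mem_powerset.mpr (Finset.filter_subset _ _))]
  refine Finset.sum_congr rfl fun ξ hξ => ?_
  have hsub : ξ ⊆ γ := Finset.mem_powerset.mp hξ
  rw [← step_fiber ν hν η γ x hd hx ξ hsub, Finset.sum_filter]
  refine Finset.sum_congr rfl fun G _ => ?_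
  by_cases h1 : nbSet η γ x (Finset.mem_union_left γ hx) G = ξ <;>
    by_cases h2 : IsRootedForest G η <;> simp [h1, h2]

open scoped Classical in
lemma finsum_ite {α : Type*} [Fintype α] (P : α → Prop) (f : α → ℝ) :
    (∑ᶠ (a : α) (_ : P a), f a) = ∑ a : α, if P a then f a else 0 := by
  rw [← finsum_eq_sum_of_fintype]
  exact finsum_congr fun a => finsum_eq_if

end Concrete4


/-- Lemma 3.1 of the paper: any kernel `Q` satisfying the recursion
`Q(η|γ) = h ∑_{ξ⊆γ} K_ν(x;ξ) Q((η∖{x})∪ξ | γ∖ξ)` (for every root `x ∈ η`), with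
`Q(∅|∅) = 1` and `Q(∅|γ) = 0` for `γ ≠ ∅`, is given by the sum over rooted
labeled forests `Q(η|γ) = ∑_{f ∈ F(η,γ)} h^{|η|+|γ|} ∏_{(x',y') ∈ E(f)} ν(x',y')`. -/
theorem kernel_equals_forest_sum {V : Type*} [Fintype V] [DecidableEq V]
    (h : ℝ) (ν : V → V → ℝ) (hν : ∀ a b, ν a b = ν b a)
    (Q : Finset V → Finset V → ℝ)
    (hQ00 : Q ∅ ∅ = 1) (hQ0 : ∀ γ, γ ≠ ∅ → Q ∅ γ = 0)
    (hQrec : ∀ η γ x, Disjoint η γ → x ∈ η →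
      Q η γ = h * ∑ ξ ∈ γ.powerset,
        (∏ y ∈ ξ, ν x y) * Q ((η.erase x) ∪ ξ) (γ \ ξ)) :
    ∀ η γ : Finset V, Disjoint η γ →
      Q η γ =
        ∑ᶠ (G : SimpleGraph (η ∪ γ : Finset V)) (_ : IsRootedForest G η),
          h ^ (η.card + γ.card) *
            ∏ e ∈ G.edgeSet.toFinite.toFinset,
              Sym2.lift ⟨fun a b : (η ∪ γ : Finset V) => ν a b, fun a b => hν a b⟩ e := by
  classical
  suffices H : ∀ (n : ℕ) (η γ : Finset V), Disjoint η γ → η.card + γ.card = n →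
      Q η γ = ∑ᶠ (G : SimpleGraph (η ∪ γ : Finset V)) (_ : IsRootedForest G η),
        h ^ (η.card + γ.card) * wgt ν hν (η ∪ γ) G by
    intro η γ hd
    exact H (η.card + γ.card) η γ hd rfl
  intro n
  induction n using Nat.strong_induction_on with
  | _ n IH =>
    intro η γ hd hcard
    rcases Finset.eq_empty_or_nonempty η with rfl | ⟨x, hx⟩
    · rcases Finset.eq_empty_or_nonempty γ with rfl | hγ
      · -- both empty
        rw [hQ00]
        haveI hempty : IsEmpty (((∅ : Finset V) ∪ (∅ : Finset V) : Finset V)) :=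
          ⟨fun a => by
            have h2 : (a : V) ∈ (∅ : Finset V) ∪ (∅ : Finset V) := a.2
            rcases Finset.mem_union.mp h2 with h2' | h2' <;>
              exact absurd h2' (Finset.notMem_empty _)⟩
        have hone : ∀ G : SimpleGraph (((∅ : Finset V) ∪ (∅ : Finset V) : Finset V)),
            (∑ᶠ (_ : IsRootedForest G (∅ : Finset V)),
              h ^ ((∅ : Finset V).card + (∅ : Finset V).card) *
                wgt ν hν ((∅ : Finset V) ∪ (∅ : Finset V)) G) = 1 := by
          intro G
          have hRF : IsRootedForest G (∅ : Finset V) := by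
            refine ⟨fun v => isEmptyElim v, fun c => ?_⟩
            obtain ⟨v, -⟩ := c.exists_rep
            exact isEmptyElim v
          have hE : G.edgeSet.toFinite.toFinset = ∅ := by
            ext e
            simp only [Set.Finite.mem_toFinset, Finset.notMem_empty, iff_false]
            intro he
            induction e with
            | _ a b => exact isEmptyElim a
          rw [finsum_eq_if, if_pos hRF, wgt, hE]
          simp
        rw [finsum_congr hone]
        haveI : Unique (SimpleGraph (((∅ : Finset V) ∪ (∅ : Finset V) : Finset V))) := by
          refine ⟨⟨⊥⟩, fun G => ?_⟩
          ext a b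
          exact isEmptyElim a
        rw [finsum_eq_sum_of_fintype]
        simp
      · -- η empty, γ nonempty
        rw [hQ0 γ (Finset.nonempty_iff_ne_empty.mp hγ)]
        have hzero : ∀ G : SimpleGraph (((∅ : Finset V) ∪ γ : Finset V)),
            (∑ᶠ (_ : IsRootedForest G (∅ : Finset V)),
              h ^ ((∅ : Finset V).card + γ.card) * wgt ν hν ((∅ : Finset V) ∪ γ) G) = 0 := by
          intro G
          have hnone : ¬ IsRootedForest G (∅ : Finset V) := by
            intro hG
            obtain ⟨v, hv⟩ := hγ
            obtain ⟨r, ⟨hr, -⟩, -⟩ :=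
              hG.2 (G.connectedComponentMk ⟨v, Finset.mem_union_right _ hv⟩)
            exact absurd hr (Finset.notMem_empty _)
          rw [finsum_eq_if, if_neg hnone]
        rw [finsum_congr hzero, finsum_zero]
    · -- η nonempty, root x
      rw [hQrec η γ x hd hx]
      have key : ∀ ξ ∈ γ.powerset,
          (∏ y ∈ ξ, ν x y) * Q (η.erase x ∪ ξ) (γ \ ξ)
          = (∏ y ∈ ξ, ν x y) * (h ^ ((η.erase x ∪ ξ).card + (γ \ ξ).card) *
              ∑ G' : SimpleGraph ((η.erase x ∪ ξ) ∪ (γ \ ξ) : Finset V),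
                if IsRootedForest G' (η.erase x ∪ ξ)
                then wgt ν hν ((η.erase x ∪ ξ) ∪ (γ \ ξ)) G' else 0) := by
        intro ξ hξ
        have hsub : ξ ⊆ γ := Finset.mem_powerset.mp hξ
        have hd1 : Disjoint (η.erase x) ξ :=
          Finset.disjoint_of_subset_left (Finset.erase_subset x η)
            (Finset.disjoint_of_subset_right hsub hd)
        have hd' : Disjoint (η.erase x ∪ ξ) (γ \ ξ) := by
          rw [Finset.disjoint_union_left]
          constructor
          · exact Finset.disjoint_of_subset_left (Finset.erase_subset x η)
              (Finset.disjoint_of_subset_right (Finset.sdiff_subset) hd)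
          · exact Finset.sdiff_disjoint.symm
        have hm : (η.erase x ∪ ξ).card + (γ \ ξ).card + 1 = n := by
          rw [Finset.card_union_of_disjoint hd1, Finset.card_erase_of_mem hx,
            Finset.card_sdiff_of_subset hsub]
          have h1 : 1 ≤ η.card := Finset.card_pos.mpr ⟨x, hx⟩
          have h2 : ξ.card ≤ γ.card := Finset.card_le_card hsub
          omega
        have hIH := IH ((η.erase x ∪ ξ).card + (γ \ ξ).card) (by omega)
          (η.erase x ∪ ξ) (γ \ ξ) hd' rfl
        rw [hIH]
        congr 1
        rw [finsum_ite (fun G' : SimpleGraph ((η.erase x ∪ ξ) ∪ (γ \ ξ) : Finset V) =>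
          IsRootedForest G' (η.erase x ∪ ξ))]
        rw [Finset.mul_sum]
        refine Finset.sum_congr rfl fun G' _ => ?_
        by_cases hRF : IsRootedForest G' (η.erase x ∪ ξ) <;> simp [hRF]
      rw [Finset.sum_congr rfl key]
      rw [finsum_ite (fun G : SimpleGraph (η ∪ γ : Finset V) => IsRootedForest G η)]
      have hpull : (∑ G : SimpleGraph (η ∪ γ : Finset V),
          if IsRootedForest G η then h ^ (η.card + γ.card) * wgt ν hν (η ∪ γ) G else 0)
          = h ^ (η.card + γ.card) * ∑ G : SimpleGraph (η ∪ γ : Finset V),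
              if IsRootedForest G η then wgt ν hν (η ∪ γ) G else 0 := by
        rw [Finset.mul_sum]
        refine Finset.sum_congr rfl fun G _ => ?_
        by_cases hRF : IsRootedForest G η <;> simp [hRF]
      rw [hpull, step_sum ν hν η γ x hd hx, Finset.mul_sum, Finset.mul_sum]
      refine Finset.sum_congr rfl fun ξ hξ => ?_
      have hsub : ξ ⊆ γ := Finset.mem_powerset.mp hξ
      have hd1 : Disjoint (η.erase x) ξ :=
        Finset.disjoint_of_subset_left (Finset.erase_subset x η)
          (Finset.disjoint_of_subset_right hsub hd)
      have hm : (η.erase x ∪ ξ).card + (γ \ ξ).card + 1 = η.card + γ.card := by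
        rw [Finset.card_union_of_disjoint hd1, Finset.card_erase_of_mem hx,
          Finset.card_sdiff_of_subset hsub]
        have h1 : 1 ≤ η.card := Finset.card_pos.mpr ⟨x, hx⟩
        have h2 : ξ.card ≤ γ.card := Finset.card_le_card hsub
        omega
      rw [← hm, pow_succ]
      ring
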